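/- arXiv:math/0504247 — 3 statements merged into one kernel-verified Lean document; each statement's English description precedes it below -/
import Mathlib

section
/- For all x_i, y_i ∈ K_i (1 ≤ i ≤ N) and all m ≤ 0, the expected distance between the two orbit endpoints satisfies ∫ d(Y^{x}_{m0}, Y^{y}_{m0}) dP^m_{x_1...x_N} ≤ a^{-m+1} (1/N) Σ_{i=1}^N d(x_i, y_i), where Y^{x}_{m0}(σ) = w_{σ_0}∘⋯∘w_{σ_m}(x_{i(σ_m)}). -/
open MeasureTheory ENNReal Filter

/-- A contractive Markov system on a metric space `K` with vertex type `V` and edge type `E`. -/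
structure CMS (E V K : Type*) [Fintype E] [MetricSpace K] [MeasurableSpace K] where
  i : E → V
  t : E → V
  Ks : V → Set K
  w : E → K → K
  p : E → K → ℝ
  a : ℝ
  ha0 : 0 < a
  ha1 : a < 1
  Ks_nonempty : ∀ v, (Ks v).Nonempty
  Ks_meas : ∀ v, MeasurableSet (Ks v)
  Ks_disj : ∀ v v', v ≠ v' → Disjoint (Ks v) (Ks v')
  Ks_cover : ∀ x : K, ∃ v, x ∈ Ks v
  w_meas : ∀ e, Measurable (w e)
  p_meas : ∀ e, Measurable (p e)
  p_nonneg : ∀ e x, 0 ≤ p e x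
  p_sum : ∀ x : K, ∑ e, p e x = 1
  p_zero : ∀ e, ∀ x ∉ Ks (i e), p e x = 0
  w_maps : ∀ e, Set.MapsTo (w e) (Ks (i e)) (Ks (t e))
  contractive : ∀ v, ∀ x ∈ Ks v, ∀ y ∈ Ks v,
      ∑ e, p e x * dist (w e x) (w e y) ≤ a * dist x y

variable {E V K : Type*} [Fintype E] [MetricSpace K] [MeasurableSpace K]

/-- `S.orbit e m x j = w_{e_{m+j}} ∘ ⋯ ∘ w_{e_m} (x)`. -/
def CMS.orbit (S : CMS E V K) (e : ℤ → E) (m : ℤ) (x : K) : ℕ → K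
  | 0 => S.w (e m) x
  | j + 1 => S.w (e (m + j + 1)) (S.orbit e m x j)

/-- `S.pathProb e m x j = p_{e_m}(x) p_{e_{m+1}}(w_{e_m}x) ⋯ p_{e_{m+j}}(w_{e_{m+j-1}}∘⋯∘w_{e_m}x)`. -/
def CMS.pathProb (S : CMS E V K) (e : ℤ → E) (m : ℤ) (x : K) : ℕ → ℝ
  | 0 => S.p (e m) x
  | j + 1 => S.pathProb e m x j * S.p (e (m + j + 1)) (S.orbit e m x j)

/-- The σ-algebra `𝒜_m` on `Σ = E^ℤ` generated by the coordinates with index `≥ m`. -/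
def Am (E : Type*) (m : ℤ) : MeasurableSpace (ℤ → E) :=
  ⨆ (i : ℤ) (_ : m ≤ i), MeasurableSpace.comap (fun σ => σ i) ⊤

/-- The cylinder `_m[e_m, …, e_{m+j}]`. -/
def cyl (m : ℤ) (j : ℕ) (e : ℤ → E) : Set (ℤ → E) :=
  {σ | ∀ k : ℤ, m ≤ k → k ≤ m + j → σ k = e k}

/-- `P` is the family of Markov measures `P^m_x` on `(Σ, 𝒜_m)` of the CMS `S`. -/
def IsKernel (S : CMS E V K) (P : ∀ m : ℤ, K → @Measure (ℤ → E) (Am E m)) : Prop :=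
  (∀ (m : ℤ) (x : K), @IsProbabilityMeasure _ (Am E m) (P m x)) ∧
  ∀ (m : ℤ) (x : K) (e : ℤ → E) (j : ℕ),
    P m x (cyl m j e) = ENNReal.ofReal (S.pathProb e m x j)

/-- The `m`-th lift `Φ_m(ν)(A) = ∫ P^m_x(A) dν(x)`. -/
noncomputable def liftMeas (P : ∀ m : ℤ, K → @Measure (ℤ → E) (Am E m))
    (m : ℤ) (ν : Measure K) (A : Set (ℤ → E)) : ℝ≥0∞ :=
  ∫⁻ x, P m x A ∂ν

/-- The lift outer measure `Φ(ν)`, via coverings `B ⊆ ⋃_{m ≤ 0} A_m`, `A_m ∈ 𝒜_m` (indexed by `m = -n`). -/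
noncomputable def PhiM (P : ∀ m : ℤ, K → @Measure (ℤ → E) (Am E m))
    (ν : Measure K) (B : Set (ℤ → E)) : ℝ≥0∞ :=
  ⨅ (A : ℕ → Set (ℤ → E)) (_ : ∀ n : ℕ, MeasurableSet[Am E (-(n : ℤ))] (A n))
    (_ : B ⊆ ⋃ n, A n), ∑' n : ℕ, liftMeas P (-(n : ℤ)) ν (A n)

/-- `Y^{x_1…x_N}_{m0}(σ) = w_{σ_0}∘⋯∘w_{σ_m}(x_{i(σ_m)})`. -/
noncomputable def CMS.Y (S : CMS E V K) (xs : V → K) (m : ℤ) (σ : ℤ → E) : K :=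
  S.orbit σ m (xs (S.i (σ m))) (-m).toNat

/-- The uniform measure `(1/N) ∑_i δ_{x_i}`. -/
noncomputable def unif [Fintype V] (xs : V → K) : Measure K :=
  ((Fintype.card V : ℝ≥0∞))⁻¹ • ∑ v : V, Measure.dirac (xs v)

/-- The measure `P^m_{x_1…x_N} = Φ_m((1/N)∑δ_{x_i}) = (1/N)∑_i P^m_{x_i}`. -/
noncomputable def PmMix [Fintype V] (P : ∀ m : ℤ, K → @Measure (ℤ → E) (Am E m))
    (xs : V → K) (m : ℤ) : @Measure (ℤ → E) (Am E m) :=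
  ((Fintype.card V : ℝ≥0∞))⁻¹ • ∑ v : V, P m (xs v)

/-! Against `P^m_x` the integrand depends only on the coordinates `σ_m, …, σ_0`, so the
integral is a finite sum over words `c` of length `n = 1 - m` weighted by the path
probabilities `p_c(x)`. A word of positive weight started at `x_v` has initial vertex `v`, so
both orbits start in `K_v`. The sum `∑_c p_c(x) d(w_c x, w_c y)` is at most `a^n d(x, y)` by
conditioning on the first edge `e`: the points `w_e x` and `w_e y` lie in the common set
`K_{t(e)}`, and the average contraction gives one factor `a`. Averaging over `v` concludes. -/

def window {E : Type*} (m : ℤ) (n : ℕ) (σ : ℤ → E) : Fin n → E :=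
  fun k => σ (m + k)

lemma window_succ_tail {E : Type*} (m : ℤ) (n : ℕ) (σ : ℤ → E) :
    Fin.tail (window m (n + 1) σ) = window (m + 1) n σ := by
  ext k
  simp only [Fin.tail, window, Fin.val_succ]
  push_cast
  ring_nf

lemma window_surjective {E : Type*} [Nonempty E] (m : ℤ) (n : ℕ) :
    Function.Surjective (window (E := E) m n) := by
  intro c
  have hinj : Function.Injective fun k : Fin n => m + (k : ℕ) := by
    intro k l h
    exact Fin.ext (by simpa using h)
  exact ⟨Function.extend _ c fun _ => Classical.arbitrary E,
    funext fun k => hinj.extend_apply c _ k⟩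

lemma cyl_eq_preimage_window {E : Type*} (m : ℤ) (j : ℕ) (e : ℤ → E) :
    cyl m j e = window m (j + 1) ⁻¹' {window m (j + 1) e} := by
  ext σ
  simp only [cyl, Set.mem_ofPred_eq, Set.mem_preimage, Set.mem_singleton_iff, funext_iff, window]
  constructor
  · intro h k
    exact h _ (by omega) (by omega)
  · intro h k hmk hkm
    obtain ⟨i, rfl⟩ : ∃ i : ℕ, k = m + i := ⟨(k - m).toNat, by omega⟩
    exact h ⟨i, by omega⟩

lemma measurable_window {E : Type*} [MeasurableSpace E] (m : ℤ) (n : ℕ) :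
    @Measurable _ _ (Am E m) _ (window m n) :=
  @measurable_pi_lambda _ _ _ (Am E m) _ _ fun k =>
    Measurable.of_comap_le <| le_iSup₂_of_le (m + (k : ℕ)) (by omega) <|
      MeasurableSpace.comap_mono le_top

namespace CMS

def wordMap (S : CMS E V K) : (n : ℕ) → (Fin n → E) → K → K
  | 0, _, x => x
  | n + 1, c, x => S.wordMap n (Fin.tail c) (S.w (c 0) x)

def wordProb (S : CMS E V K) : (n : ℕ) → (Fin n → E) → K → ℝ
  | 0, _, _ => 1
  | n + 1, c, x => S.p (c 0) x * S.wordProb n (Fin.tail c) (S.w (c 0) x)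

variable (S : CMS E V K)

lemma wordProb_nonneg (n : ℕ) (c : Fin n → E) (x : K) : 0 ≤ S.wordProb n c x := by
  induction n generalizing x with
  | zero => exact zero_le_one
  | succ n ih => exact mul_nonneg (S.p_nonneg _ _) (ih _ _)

lemma i_eq_of_p_ne_zero {e : E} {v : V} {x : K} (hx : x ∈ S.Ks v) (h : S.p e x ≠ 0) :
    S.i e = v := by
  by_contra hne
  have hx' : x ∈ S.Ks (S.i e) := by
    by_contra h'
    exact h (S.p_zero e x h')
  exact Set.disjoint_left.mp (S.Ks_disj _ _ hne) hx' hx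

lemma i_head_eq_of_wordProb_ne_zero {n : ℕ} {c : Fin (n + 1) → E} {v : V} {x : K}
    (hx : x ∈ S.Ks v) (h : S.wordProb (n + 1) c x ≠ 0) : S.i (c 0) = v :=
  S.i_eq_of_p_ne_zero hx (left_ne_zero_of_mul h)

lemma sum_wordProb_mul_dist_le (n : ℕ) {v : V} {x y : K} (hx : x ∈ S.Ks v) (hy : y ∈ S.Ks v) :
    ∑ c : Fin n → E, S.wordProb n c x * dist (S.wordMap n c x) (S.wordMap n c y)
      ≤ S.a ^ n * dist x y := by
  induction n generalizing v x y with
  | zero => simp [wordProb, wordMap]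
  | succ n ih =>
    have hstep : ∀ e, S.p e x *
        ∑ c : Fin n → E, S.wordProb n c (S.w e x) * dist (S.wordMap n c (S.w e x))
          (S.wordMap n c (S.w e y)) ≤ S.p e x * (S.a ^ n * dist (S.w e x) (S.w e y)) := by
      intro e
      by_cases hpe : S.p e x = 0
      · simp [hpe]
      have hie := S.i_eq_of_p_ne_zero hx hpe
      exact mul_le_mul_of_nonneg_left
        (ih (S.w_maps e (hie ▸ hx)) (S.w_maps e (hie ▸ hy))) (S.p_nonneg e x)
    calc ∑ c : Fin (n + 1) → E, S.wordProb (n + 1) c x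
            * dist (S.wordMap (n + 1) c x) (S.wordMap (n + 1) c y)
        = ∑ e, S.p e x * ∑ c : Fin n → E, S.wordProb n c (S.w e x)
            * dist (S.wordMap n c (S.w e x)) (S.wordMap n c (S.w e y)) := by
          rw [← (Fin.consEquiv fun _ => E).sum_comp, Fintype.sum_prod_type]
          simp [Fin.consEquiv, wordProb, wordMap, Finset.mul_sum, mul_assoc]
      _ ≤ ∑ e, S.p e x * (S.a ^ n * dist (S.w e x) (S.w e y)) :=
          Finset.sum_le_sum fun e _ => hstep e
      _ = S.a ^ n * ∑ e, S.p e x * dist (S.w e x) (S.w e y) := by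
          rw [Finset.mul_sum]
          exact Finset.sum_congr rfl fun e _ => by ring
      _ ≤ S.a ^ n * (S.a * dist x y) :=
          mul_le_mul_of_nonneg_left (S.contractive v x hx y hy) (pow_nonneg S.ha0.le _)
      _ = S.a ^ (n + 1) * dist x y := by ring

lemma orbit_succ (e : ℤ → E) (m : ℤ) (x : K) (j : ℕ) :
    S.orbit e m x (j + 1) = S.orbit e (m + 1) (S.w (e m) x) j := by
  induction j with
  | zero => simp [orbit]
  | succ j ih =>
    rw [orbit, ih, orbit]
    congr 2
    push_cast
    ring

lemma pathProb_succ (e : ℤ → E) (m : ℤ) (x : K) (j : ℕ) :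
    S.pathProb e m x (j + 1) = S.p (e m) x * S.pathProb e (m + 1) (S.w (e m) x) j := by
  induction j with
  | zero => simp [pathProb, orbit]
  | succ j ih =>
    rw [pathProb, ih, pathProb, mul_assoc, orbit_succ]
    congr 4
    push_cast
    ring

lemma orbit_eq_wordMap (e : ℤ → E) (m : ℤ) (x : K) (j : ℕ) :
    S.orbit e m x j = S.wordMap (j + 1) (window m (j + 1) e) x := by
  induction j generalizing m x with
  | zero => simp [orbit, wordMap, window]
  | succ j ih =>
    rw [orbit_succ, ih]
    conv_rhs => rw [wordMap, window_succ_tail]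
    simp [window]

lemma pathProb_eq_wordProb (e : ℤ → E) (m : ℤ) (x : K) (j : ℕ) :
    S.pathProb e m x j = S.wordProb (j + 1) (window m (j + 1) e) x := by
  induction j generalizing m x with
  | zero => simp [pathProb, wordProb, window]
  | succ j ih =>
    rw [pathProb_succ, ih]
    conv_rhs => rw [wordProb, window_succ_tail]
    simp [window]

lemma Y_eq_wordMap (xs : V → K) (m : ℤ) (σ : ℤ → E) :
    S.Y xs m σ = S.wordMap ((-m).toNat + 1) (window m _ σ)
      (xs (S.i (window m ((-m).toNat + 1) σ 0))) := by
  simp [Y, orbit_eq_wordMap, window]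

end CMS

section

variable {S : CMS E V K} {P : ∀ m : ℤ, K → @Measure (ℤ → E) (Am E m)}

lemma IsKernel.measure_preimage_window (hP : IsKernel S P) (m : ℤ) (j : ℕ) (z : K)
    (c : Fin (j + 1) → E) :
    P m z (window m (j + 1) ⁻¹' {c}) = ENNReal.ofReal (S.wordProb (j + 1) c z) := by
  have : Nonempty E := ⟨c 0⟩
  obtain ⟨e, rfl⟩ := window_surjective m (j + 1) c
  rw [← cyl_eq_preimage_window, hP.2, S.pathProb_eq_wordProb]

lemma IsKernel.lintegral_comp_window (hP : IsKernel S P) (m : ℤ) (j : ℕ) (z : K)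
    (f : (Fin (j + 1) → E) → ℝ≥0∞) :
    ∫⁻ σ, f (window m (j + 1) σ) ∂(P m z)
      = ∑ c, f c * ENNReal.ofReal (S.wordProb (j + 1) c z) := by
  let : MeasurableSpace E := ⊤
  let : MeasurableSpace (ℤ → E) := Am E m
  have hw := measurable_window (E := E) m (j + 1)
  rw [← lintegral_map Measurable.of_discrete hw, lintegral_fintype]
  refine Finset.sum_congr rfl fun c _ => ?_
  rw [Measure.map_apply hw (measurableSet_singleton c), hP.measure_preimage_window]

lemma IsKernel.lintegral_dist_Y_le (hP : IsKernel S P) {xs ys : V → K} {v : V}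
    (hx : xs v ∈ S.Ks v) (hy : ys v ∈ S.Ks v) (m : ℤ) :
    ∫⁻ σ, ENNReal.ofReal (dist (S.Y xs m σ) (S.Y ys m σ)) ∂(P m (xs v))
      ≤ ENNReal.ofReal (S.a ^ ((-m).toNat + 1) * dist (xs v) (ys v)) := by
  set n := (-m).toNat + 1
  set F : (Fin n → E) → ℝ≥0∞ := fun c =>
    ENNReal.ofReal (dist (S.wordMap n c (xs (S.i (c 0)))) (S.wordMap n c (ys (S.i (c 0)))))
  have hterm : ∀ c, F c * ENNReal.ofReal (S.wordProb n c (xs v)) = ENNReal.ofReal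
      (S.wordProb n c (xs v) * dist (S.wordMap n c (xs v)) (S.wordMap n c (ys v))) := by
    intro c
    by_cases h0 : S.wordProb n c (xs v) = 0
    · simp [h0]
    simp only [F]
    rw [S.i_head_eq_of_wordProb_ne_zero hx h0, ENNReal.ofReal_mul (S.wordProb_nonneg _ _ _),
      mul_comm]
  calc ∫⁻ σ, ENNReal.ofReal (dist (S.Y xs m σ) (S.Y ys m σ)) ∂(P m (xs v))
      = ∑ c, F c * ENNReal.ofReal (S.wordProb n c (xs v)) := by
        simp only [S.Y_eq_wordMap]
        exact hP.lintegral_comp_window m _ (xs v) F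
    _ = ENNReal.ofReal (∑ c, S.wordProb n c (xs v)
          * dist (S.wordMap n c (xs v)) (S.wordMap n c (ys v))) := by
        rw [ENNReal.ofReal_sum_of_nonneg fun c _ =>
          mul_nonneg (S.wordProb_nonneg _ _ _) dist_nonneg]
        exact Finset.sum_congr rfl fun c _ => hterm c
    _ ≤ _ := ENNReal.ofReal_le_ofReal (S.sum_wordProb_mul_dist_le n hx hy)

end

lemma inv_card_mul_sum_ofReal {ι : Type*} [Fintype ι] {r : ι → ℝ} (hr : ∀ i, 0 ≤ r i) :
    (Fintype.card ι : ℝ≥0∞)⁻¹ * ∑ i, ENNReal.ofReal (r i)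
      = ENNReal.ofReal ((Fintype.card ι : ℝ)⁻¹ * ∑ i, r i) := by
  rcases isEmpty_or_nonempty ι with hι | hι
  · simp
  have hcard : (0 : ℝ) < Fintype.card ι := by exact_mod_cast Fintype.card_pos
  rw [ENNReal.ofReal_mul (inv_nonneg.mpr hcard.le), ENNReal.ofReal_inv_of_pos hcard,
    ENNReal.ofReal_natCast, ENNReal.ofReal_sum_of_nonneg fun i _ => hr i]

theorem statement3_general {E V K : Type*} [Fintype E] [Fintype V] [MetricSpace K]
    [MeasurableSpace K] (S : CMS E V K)
    (P : ∀ m : ℤ, K → @Measure (ℤ → E) (Am E m)) (hP : IsKernel S P)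
    (xs ys : V → K) (hxs : ∀ v, xs v ∈ S.Ks v) (hys : ∀ v, ys v ∈ S.Ks v) :
    ∀ m : ℤ, m ≤ 0 →
      ∫⁻ σ, ENNReal.ofReal (dist (S.Y xs m σ) (S.Y ys m σ)) ∂(PmMix P xs m) ≤
        ENNReal.ofReal (S.a ^ (1 - m).toNat *
          ((Fintype.card V : ℝ)⁻¹ * ∑ v, dist (xs v) (ys v))) := by
  intro m hm
  calc ∫⁻ σ, ENNReal.ofReal (dist (S.Y xs m σ) (S.Y ys m σ)) ∂(PmMix P xs m)
      = (Fintype.card V : ℝ≥0∞)⁻¹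
          * ∑ v, ∫⁻ σ, ENNReal.ofReal (dist (S.Y xs m σ) (S.Y ys m σ))
            ∂(P m (xs v)) := by
        rw [PmMix, lintegral_smul_measure, lintegral_finsetSum_measure, smul_eq_mul]
    _ ≤ (Fintype.card V : ℝ≥0∞)⁻¹
          * ∑ v, ENNReal.ofReal (S.a ^ ((-m).toNat + 1) * dist (xs v) (ys v)) := by
        gcongr with v
        exact hP.lintegral_dist_Y_le (hxs v) (hys v) m
    _ = ENNReal.ofReal ((Fintype.card V : ℝ)⁻¹
          * ∑ v, S.a ^ ((-m).toNat + 1) * dist (xs v) (ys v)) :=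
        inv_card_mul_sum_ofReal fun v => mul_nonneg (pow_nonneg S.ha0.le _) dist_nonneg
    _ = _ := by
        rw [← Finset.mul_sum, show (1 - m).toNat = (-m).toNat + 1 by omega]
        ring_nf

/-- `∫ d(Y^x_{m0}, Y^y_{m0}) dP^m_{x_1…x_N} ≤ a^{-m+1} (1/N) ∑_i d(x_i,y_i)`. -/
theorem statement3 {E V K : Type*} [Fintype E] [Fintype V] [MetricSpace K] [CompleteSpace K]
    [MeasurableSpace K] [BorelSpace K] (S : CMS E V K)
    (P : ∀ m : ℤ, K → @Measure (ℤ → E) (Am E m)) (hP : IsKernel S P)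
    (xs ys : V → K) (hxs : ∀ v, xs v ∈ S.Ks v) (hys : ∀ v, ys v ∈ S.Ks v) :
    ∀ m : ℤ, m ≤ 0 →
      ∫⁻ σ, ENNReal.ofReal (dist (S.Y xs m σ) (S.Y ys m σ)) ∂(PmMix P xs m) ≤
        ENNReal.ofReal (S.a ^ (1 - m).toNat *
          ((Fintype.card V : ℝ)⁻¹ * ∑ v, dist (xs v) (ys v))) :=
  statement3_general S P hP xs ys hxs hys
end

section
/- If two sequences (w_{σ_n}∘⋯∘w_{σ_m}(x))_{n≥m} and (w_{σ_n}∘⋯∘w_{σ_m}(x_{i(σ_m)}))_{n≥m} are started at x ∈ K_{i_0} and at prescribed points, then for every m ≤ 0 and ε > 0 there exist k ≥ m and B ∈ 𝒜_m with P^m_x(B) < ε such that for all σ ∉ B and all n ≥ k, d(Z^x_{mn}(σ), Y^{x_1...x_N}_{mn}(σ)) ≤ a^{(n−m+1)/2} d(x, x_{i_0}). -/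
open MeasureTheory ENNReal Filter

variable {E V K : Type*} [Fintype E] [MetricSpace K] [MeasurableSpace K]

/-! Along paths of positive probability the orbits of `x` and of `x_{i(σ_m)} = x_{i₀}` stay in a
common piece, so the contraction inequality bounds the expected distance
`∑ P^m_x(cylinder) · d(Z_{m,m+j}, Y_{m,m+j})` over cylinders of length `j + 1` by
`a^(j+1) d(x, x_{i₀})`. By Markov's inequality the orbits are more than `√a^(j+1) d(x, x_{i₀})`
apart with probability at most `√a^(j+1)`, a summable bound; discarding these events for all times
`j ≥ J` costs the tail of a geometric series, which is below `ε` for `J` large. -/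

set_option linter.unusedSectionVars false

lemma Finset.sum_filter_lt_le_of_sum_mul_le {ι : Type*} (s : Finset ι) {p f : ι → ℝ} {c r : ℝ}
    (hp : ∀ i ∈ s, 0 ≤ p i) (hf : ∀ i ∈ s, 0 ≤ f i) (hc : 0 ≤ c) (hr : 0 ≤ r)
    (h : ∑ i ∈ s, p i * f i ≤ c * r) : ∑ i ∈ s with c < f i, p i ≤ r := by
  have hpf : ∀ i ∈ s, 0 ≤ p i * f i := fun i hi => mul_nonneg (hp i hi) (hf i hi)
  have hbad : ∑ i ∈ s with c < f i, c * p i ≤ c * r := by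
    calc ∑ i ∈ s with c < f i, c * p i
        ≤ ∑ i ∈ s with c < f i, p i * f i :=
          Finset.sum_le_sum fun i hi => by
            rw [Finset.mem_filter] at hi
            nlinarith [hp i hi.1]
      _ ≤ ∑ i ∈ s, p i * f i :=
          Finset.sum_le_sum_of_subset_of_nonneg (Finset.filter_subset _ _) fun i hi _ => hpf i hi
      _ ≤ c * r := h
  rcases hc.lt_or_eq with hc | rfl
  · rw [← Finset.mul_sum] at hbad
    exact le_of_mul_le_mul_left hbad hc
  · -- with `c = 0` every `p i * f i` vanishes, hence so does `p i` wherever `0 < f i`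
    have hzero : ∀ i ∈ s, p i * f i = 0 :=
      (Finset.sum_eq_zero_iff_of_nonneg hpf).1 (le_antisymm (by simpa using h) (sum_nonneg hpf))
    refine le_of_eq_of_le (Finset.sum_eq_zero fun i hi => ?_) hr
    rw [Finset.mem_filter] at hi
    exact (mul_eq_zero.1 (hzero i hi.1)).resolve_right hi.2.ne'

lemma Fintype.sum_fin_succ_pi {β M : Type*} [Fintype β] [AddCommMonoid M] (j : ℕ)
    (F : (Fin (j + 2) → β) → M) :
    ∑ s, F s = ∑ t : Fin (j + 1) → β, ∑ e, F (Fin.snoc t e) := by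
  rw [← (Fin.snocEquiv fun _ => β).sum_comp, Fintype.sum_prod_type_right]
  rfl

section Cylinders

lemma mem_cyl_comm {m : ℤ} {j : ℕ} {σ τ : ℤ → E} : τ ∈ cyl m j σ ↔ σ ∈ cyl m j τ :=
  ⟨fun h k h₁ h₂ => (h k h₁ h₂).symm, fun h k h₁ h₂ => (h k h₁ h₂).symm⟩

lemma mem_cyl_of_le {m : ℤ} {j j' : ℕ} {σ τ : ℤ → E} (hj : j ≤ j') (h : τ ∈ cyl m j' σ) :
    τ ∈ cyl m j σ :=
  fun k h₁ h₂ => h k h₁ (by omega)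

lemma measurableSet_cyl (m : ℤ) (j : ℕ) (e : ℤ → E) : MeasurableSet[Am E m] (cyl m j e) := by
  have hcoord : ∀ k, m ≤ k → MeasurableSpace.comap (fun σ : ℤ → E => σ k) ⊤ ≤ Am E m :=
    fun k hk => le_iSup₂_of_le (f := fun k (_ : m ≤ k) => MeasurableSpace.comap _ ⊤) k hk le_rfl
  have hcyl : cyl m j e = ⋂ k ∈ Finset.Icc m (m + j), (fun σ : ℤ → E => σ k) ⁻¹' {e k} := by
    ext σ
    simp [cyl]
  rw [hcyl]
  refine Finset.measurableSet_biInter _ fun k hk => hcoord k (Finset.mem_Icc.1 hk).1 _ ?_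
  exact ⟨{e k}, trivial, rfl⟩

/-- The sequence reading `s` on the window `[m, m + j]`, clamped outside it. -/
def extendPattern (m : ℤ) (j : ℕ) (s : Fin (j + 1) → E) : ℤ → E :=
  fun k => s ⟨min (k - m).toNat j, by omega⟩

lemma extendPattern_restrict_mem_cyl (m : ℤ) (j : ℕ) (σ : ℤ → E) :
    extendPattern m j (fun i => σ (m + i)) ∈ cyl m j σ := by
  intro k h₁ h₂
  simp only [extendPattern]
  congr 1
  omega

lemma extendPattern_snoc_mem_cyl (m : ℤ) (j : ℕ) (t : Fin (j + 1) → E) (e : E) :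
    extendPattern m (j + 1) (Fin.snoc t e) ∈ cyl m j (extendPattern m j t) := by
  intro k h₁ h₂
  have hlt : min (k - m).toNat (j + 1) < j + 1 := by omega
  simp only [extendPattern, Fin.snoc, hlt, dite_true, cast_eq]
  congr 1
  ext
  simp only [Fin.val_castLT]
  omega

lemma extendPattern_snoc_last (m : ℤ) (j : ℕ) (t : Fin (j + 1) → E) (e : E) :
    extendPattern m (j + 1) (Fin.snoc t e) (m + j + 1) = e := by
  have : (⟨min (m + j + 1 - m).toNat (j + 1), by omega⟩ : Fin (j + 2)) = Fin.last (j + 1) := by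
    ext
    simp only [Fin.val_last]
    omega
  simp only [extendPattern, this, Fin.snoc_last]

lemma eq_biUnion_cyl_extendPattern {m : ℤ} {j : ℕ} {A : Set (ℤ → E)}
    (hA : ∀ σ ∈ A, cyl m j σ ⊆ A) :
    A = ⋃ s ∈ {s : Fin (j + 1) → E | extendPattern m j s ∈ A}, cyl m j (extendPattern m j s) := by
  ext σ
  simp only [Set.mem_iUnion, Set.mem_ofPred_eq, exists_prop]
  constructor
  · intro hσ
    have hσ' := extendPattern_restrict_mem_cyl m j σ
    exact ⟨_, hA σ hσ hσ', mem_cyl_comm.1 hσ'⟩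
  · rintro ⟨s, hs, hσ⟩
    exact hA _ hs hσ

lemma measurableSet_of_forall_cyl_subset {m : ℤ} {j : ℕ} {A : Set (ℤ → E)}
    (hA : ∀ σ ∈ A, cyl m j σ ⊆ A) : MeasurableSet[Am E m] A := by
  rw [eq_biUnion_cyl_extendPattern hA]
  exact MeasurableSet.biUnion (Set.to_countable _) fun s _ => measurableSet_cyl m j _

end Cylinders

namespace CMS

variable (S : CMS E V K)

lemma eq_of_mem_Ks {v v' : V} {y : K} (hv : y ∈ S.Ks v) (hv' : y ∈ S.Ks v') : v = v' := by
  by_contra hne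
  exact (S.Ks_disj v v' hne).ne_of_mem hv hv' rfl

lemma mem_Ks_of_p_ne_zero {e : E} {y : K} (h : S.p e y ≠ 0) : y ∈ S.Ks (S.i e) := by
  by_contra hy
  exact h (S.p_zero e y hy)

lemma orbit_congr {σ τ : ℤ → E} {m : ℤ} {j : ℕ} (h : τ ∈ cyl m j σ) (y : K) :
    S.orbit τ m y j = S.orbit σ m y j := by
  induction j with
  | zero => simp [orbit, h m le_rfl (by simp)]
  | succ j ih =>
    rw [orbit, orbit, ih (mem_cyl_of_le j.le_succ h), h _ (by omega) (by push_cast; omega)]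

lemma pathProb_congr {σ τ : ℤ → E} {m : ℤ} {j : ℕ} (h : τ ∈ cyl m j σ) (y : K) :
    S.pathProb τ m y j = S.pathProb σ m y j := by
  induction j with
  | zero => simp [pathProb, h m le_rfl (by simp)]
  | succ j ih =>
    have h' := mem_cyl_of_le j.le_succ h
    rw [pathProb, pathProb, ih h', S.orbit_congr h', h _ (by omega) (by push_cast; omega)]

lemma pathProb_nonneg (σ : ℤ → E) (m : ℤ) (y : K) (j : ℕ) : 0 ≤ S.pathProb σ m y j := by
  induction j with
  | zero => exact S.p_nonneg _ _
  | succ j ih => exact mul_nonneg ih (S.p_nonneg _ _)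

lemma orbit_mem_Ks_of_pathProb_ne_zero {σ : ℤ → E} {m : ℤ} {x : K} {j : ℕ}
    (h : S.pathProb σ m x j ≠ 0) :
    x ∈ S.Ks (S.i (σ m)) ∧ ∀ y ∈ S.Ks (S.i (σ m)), S.orbit σ m y j ∈ S.Ks (S.t (σ (m + j))) := by
  induction j with
  | zero =>
    exact ⟨S.mem_Ks_of_p_ne_zero h, fun y hy => by simpa [orbit] using S.w_maps (σ m) hy⟩
  | succ j ih =>
    rw [pathProb, mul_ne_zero_iff] at h
    obtain ⟨hx, horbit⟩ := ih h.1
    have hnext := S.mem_Ks_of_p_ne_zero h.2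
    have hlink : S.t (σ (m + j)) = S.i (σ (m + j + 1)) := S.eq_of_mem_Ks (horbit x hx) hnext
    refine ⟨hx, fun y hy => ?_⟩
    have hy' := horbit y hy
    rw [hlink] at hy'
    rw [orbit, show m + ((j + 1 : ℕ) : ℤ) = m + j + 1 by push_cast; ring]
    exact S.w_maps _ hy'

theorem sum_pathProb_mul_dist_orbit_le {v : V} {x y : K} (hx : x ∈ S.Ks v) (hy : y ∈ S.Ks v)
    (m : ℤ) (j : ℕ) :
    ∑ s : Fin (j + 1) → E, S.pathProb (extendPattern m j s) m x j *
        dist (S.orbit (extendPattern m j s) m x j) (S.orbit (extendPattern m j s) m y j) ≤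
      S.a ^ (j + 1) * dist x y := by
  induction j with
  | zero =>
    rw [← (Equiv.funUnique (Fin 1) E).symm.sum_comp, zero_add, pow_one]
    exact S.contractive v x hx y hy
  | succ j ih =>
    rw [Fintype.sum_fin_succ_pi]
    set d : ℕ → (ℤ → E) → ℝ := fun j σ => dist (S.orbit σ m x j) (S.orbit σ m y j)
    have hstep : ∀ (t : Fin (j + 1) → E) (e : E),
        S.pathProb (extendPattern m (j + 1) (Fin.snoc t e)) m x (j + 1) *
            d (j + 1) (extendPattern m (j + 1) (Fin.snoc t e)) =
          S.pathProb (extendPattern m j t) m x j *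
            (S.p e (S.orbit (extendPattern m j t) m x j) *
              dist (S.w e (S.orbit (extendPattern m j t) m x j))
                (S.w e (S.orbit (extendPattern m j t) m y j))) := by
      intro t e
      have hcyl := extendPattern_snoc_mem_cyl m j t e
      simp only [d, pathProb, orbit, S.pathProb_congr hcyl, S.orbit_congr hcyl,
        extendPattern_snoc_last]
      ring
    have hcontract : ∀ t : Fin (j + 1) → E,
        S.pathProb (extendPattern m j t) m x j *
            ∑ e, S.p e (S.orbit (extendPattern m j t) m x j) *
              dist (S.w e (S.orbit (extendPattern m j t) m x j))
                (S.w e (S.orbit (extendPattern m j t) m y j)) ≤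
          S.a * (S.pathProb (extendPattern m j t) m x j * d j (extendPattern m j t)) := by
      intro t
      rcases eq_or_ne (S.pathProb (extendPattern m j t) m x j) 0 with h0 | h0
      · simp [h0]
      obtain ⟨hxσ, horbit⟩ := S.orbit_mem_Ks_of_pathProb_ne_zero h0
      have hyσ : y ∈ S.Ks (S.i (extendPattern m j t m)) := S.eq_of_mem_Ks hx hxσ ▸ hy
      have := S.contractive _ _ (horbit x hxσ) _ (horbit y hyσ)
      nlinarith [S.pathProb_nonneg (extendPattern m j t) m x j]
    calc ∑ t : Fin (j + 1) → E, ∑ e,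
          S.pathProb (extendPattern m (j + 1) (Fin.snoc t e)) m x (j + 1) *
            d (j + 1) (extendPattern m (j + 1) (Fin.snoc t e))
        ≤ ∑ t : Fin (j + 1) → E, S.a * (S.pathProb (extendPattern m j t) m x j *
            d j (extendPattern m j t)) := by
          refine Finset.sum_le_sum fun t _ => ?_
          simp only [hstep, ← Finset.mul_sum]
          exact hcontract t
      _ ≤ S.a * (S.a ^ (j + 1) * dist x y) := by
          rw [← Finset.mul_sum]
          exact mul_le_mul_of_nonneg_left ih S.ha0.le
      _ = S.a ^ (j + 1 + 1) * dist x y := by ring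

end CMS

open Classical in
lemma IsKernel.measure_le_sum_pathProb {S : CMS E V K}
    {P : ∀ m : ℤ, K → @Measure (ℤ → E) (Am E m)} (hP : IsKernel S P)
    {m : ℤ} {j : ℕ} {A : Set (ℤ → E)} (hA : ∀ σ ∈ A, cyl m j σ ⊆ A) (x : K) :
    P m x A ≤ ENNReal.ofReal (∑ s : Fin (j + 1) → E with extendPattern m j s ∈ A,
      S.pathProb (extendPattern m j s) m x j) := by
  rw [ENNReal.ofReal_sum_of_nonneg fun s _ => S.pathProb_nonneg _ _ _ _]
  calc P m x A
      = P m x (⋃ s ∈ Finset.univ.filter fun s => extendPattern m j s ∈ A,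
          cyl m j (extendPattern m j s)) := by
        conv_lhs => rw [eq_biUnion_cyl_extendPattern hA]
        simp
    _ ≤ _ := measure_biUnion_finset_le _ _
    _ = _ := Finset.sum_congr rfl fun s _ => hP.2 m x _ j

namespace CMS

variable (S : CMS E V K)

def orbitsApart (xs : V → K) (x : K) (m : ℤ) (j : ℕ) (c : ℝ) : Set (ℤ → E) :=
  {σ | c < dist (S.orbit σ m x j) (S.orbit σ m (xs (S.i (σ m))) j)}

lemma cyl_subset_orbitsApart {xs : V → K} {x : K} {m : ℤ} {j : ℕ} {c : ℝ} {σ : ℤ → E}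
    (hσ : σ ∈ S.orbitsApart xs x m j c) : cyl m j σ ⊆ S.orbitsApart xs x m j c := by
  intro τ hτ
  simpa only [orbitsApart, Set.mem_ofPred_eq, S.orbit_congr hτ, hτ m le_rfl (by omega)] using hσ

lemma measurableSet_orbitsApart (xs : V → K) (x : K) (m : ℤ) (j : ℕ) (c : ℝ) :
    MeasurableSet[Am E m] (S.orbitsApart xs x m j c) :=
  measurableSet_of_forall_cyl_subset fun _ => S.cyl_subset_orbitsApart

theorem measure_orbitsApart_le {P : ∀ m : ℤ, K → @Measure (ℤ → E) (Am E m)} (hP : IsKernel S P)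
    {xs : V → K} (hxs : ∀ v, xs v ∈ S.Ks v) {x : K} {i₀ : V} (hx : x ∈ S.Ks i₀) (m : ℤ) (j : ℕ) :
    P m x (S.orbitsApart xs x m j (√S.a ^ (j + 1) * dist x (xs i₀))) ≤
      ENNReal.ofReal (√S.a ^ (j + 1)) := by
  classical
  refine (hP.measure_le_sum_pathProb (fun _ => S.cyl_subset_orbitsApart) x).trans
    (ENNReal.ofReal_le_ofReal ?_)
  refine Finset.sum_filter_lt_le_of_sum_mul_le _ (fun s _ => S.pathProb_nonneg _ _ _ _)
    (fun s _ => dist_nonneg) (by positivity) (by positivity) ?_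
  have hstart : ∀ s : Fin (j + 1) → E, S.pathProb (extendPattern m j s) m x j ≠ 0 →
      xs (S.i (extendPattern m j s m)) = xs i₀ := fun s hs =>
    congrArg xs (S.eq_of_mem_Ks (S.orbit_mem_Ks_of_pathProb_ne_zero hs).1 hx)
  calc ∑ s, S.pathProb (extendPattern m j s) m x j *
        dist (S.orbit (extendPattern m j s) m x j)
          (S.orbit (extendPattern m j s) m (xs (S.i (extendPattern m j s m))) j)
      = ∑ s, S.pathProb (extendPattern m j s) m x j *
          dist (S.orbit (extendPattern m j s) m x j)
            (S.orbit (extendPattern m j s) m (xs i₀) j) := by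
        refine Finset.sum_congr rfl fun s _ => ?_
        rcases eq_or_ne (S.pathProb (extendPattern m j s) m x j) 0 with h0 | h0
        · simp [h0]
        · rw [hstart s h0]
    _ ≤ S.a ^ (j + 1) * dist x (xs i₀) := S.sum_pathProb_mul_dist_orbit_le hx (hxs i₀) m j
    _ = √S.a ^ (j + 1) * dist x (xs i₀) * √S.a ^ (j + 1) := by
        rw [mul_right_comm, ← mul_pow, Real.mul_self_sqrt S.ha0.le]

end CMS

theorem statement7_general {E V K : Type*} [Fintype E] [MetricSpace K]
    [MeasurableSpace K] (S : CMS E V K)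
    (P : ∀ m : ℤ, K → @Measure (ℤ → E) (Am E m)) (hP : IsKernel S P)
    (xs : V → K) (hxs : ∀ v, xs v ∈ S.Ks v)
    (x : K) (i₀ : V) (hx : x ∈ S.Ks i₀) :
    ∀ m : ℤ, m ≤ 0 → ∀ ε : ℝ, 0 < ε →
      ∃ k : ℤ, m ≤ k ∧ ∃ B : Set (ℤ → E), MeasurableSet[Am E m] B ∧
        P m x B < ENNReal.ofReal ε ∧
        ∀ σ : ℤ → E, σ ∉ B → ∀ n : ℤ, k ≤ n →
          dist (S.orbit σ m x (n - m).toNat)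
              (S.orbit σ m (xs (S.i (σ m))) (n - m).toNat) ≤
            Real.sqrt S.a ^ (n - m + 1).toNat * dist x (xs i₀) := by
  intro m _ ε hε
  set bad : ℕ → Set (ℤ → E) := fun j => S.orbitsApart xs x m j (√S.a ^ (j + 1) * dist x (xs i₀))
  have hsqrt : √S.a < 1 := (Real.sqrt_lt' one_pos).2 (by simpa using S.ha1)
  have hsummable : Summable fun j : ℕ => √S.a ^ (j + 1) :=
    (summable_geometric_of_lt_one (by positivity) hsqrt).comp_injective (add_left_injective 1)
  have htail := ENNReal.tendsto_sum_nat_add (fun j => ENNReal.ofReal (√S.a ^ (j + 1)))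
    (ENNReal.ofReal_tsum_of_nonneg (fun j => by positivity) hsummable ▸ ENNReal.ofReal_ne_top)
  obtain ⟨J, hJ⟩ := (htail.eventually (gt_mem_nhds (ENNReal.ofReal_pos.2 hε))).exists
  refine ⟨m + J, by omega, ⋃ j, bad (j + J),
    MeasurableSet.iUnion fun j => S.measurableSet_orbitsApart _ _ _ _ _, ?_, ?_⟩
  · calc P m x (⋃ j, bad (j + J))
        ≤ ∑' j, P m x (bad (j + J)) := measure_iUnion_le _
      _ ≤ ∑' j, ENNReal.ofReal (√S.a ^ (j + J + 1)) :=
          ENNReal.tsum_le_tsum fun j => S.measure_orbitsApart_le hP hxs hx m (j + J)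
      _ < ENNReal.ofReal ε := hJ
  · intro σ hσ n hn
    obtain ⟨j, rfl⟩ : ∃ j : ℕ, n = m + J + j := ⟨(n - m - J).toNat, by omega⟩
    have hgood : σ ∉ bad (j + J) := fun h => hσ (Set.mem_iUnion.2 ⟨j, h⟩)
    rw [show (m + J + j - m).toNat = j + J by omega,
      show (m + J + j - m + 1).toNat = j + J + 1 by omega]
    simpa [bad, CMS.orbitsApart] using hgood

/-- for every `m ≤ 0` and `ε > 0` there are `k ≥ m` and `B ∈ 𝒜_m` with
`P^m_x(B) < ε` such that off `B`, for all `n ≥ k`,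
`d(Z^x_{mn}(σ), Y^{x_1…x_N}_{mn}(σ)) ≤ a^{(n-m+1)/2} d(x, x_{i₀})`. -/
theorem statement7 {E V K : Type*} [Fintype E] [Fintype V] [MetricSpace K] [CompleteSpace K]
    [MeasurableSpace K] [BorelSpace K] (S : CMS E V K)
    (P : ∀ m : ℤ, K → @Measure (ℤ → E) (Am E m)) (hP : IsKernel S P)
    (xs : V → K) (hxs : ∀ v, xs v ∈ S.Ks v)
    (x : K) (i₀ : V) (hx : x ∈ S.Ks i₀) :
    ∀ m : ℤ, m ≤ 0 → ∀ ε : ℝ, 0 < ε →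
      ∃ k : ℤ, m ≤ k ∧ ∃ B : Set (ℤ → E), MeasurableSet[Am E m] B ∧
        P m x B < ENNReal.ofReal ε ∧
        ∀ σ : ℤ → E, σ ∉ B → ∀ n : ℤ, k ≤ n →
          dist (S.orbit σ m x (n - m).toNat)
              (S.orbit σ m (xs (S.i (σ m))) (n - m).toNat) ≤
            Real.sqrt S.a ^ (n - m + 1).toNat * dist x (xs i₀) :=
  statement7_general S P hP xs hxs x i₀ hx
end

section
/- For every n ≥ m, ∫ d(Z^x_{mn}, Y^{x_1...x_N}_{mn}) dP^m_x ≤ a^{n−m+1} d(x, x_{i_0}), where x ∈ K_{i_0}. -/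
open MeasureTheory ENNReal Filter

variable {E V K : Type*} [Fintype E] [MetricSpace K] [MeasurableSpace K]

def orbL (S : CMS E V K) : K → List E → K
  | x, [] => x
  | x, e :: l => orbL S (S.w e x) l

def probL (S : CMS E V K) : K → List E → ℝ
  | _, [] => 1
  | x, e :: l => S.p e x * probL S (S.w e x) l

lemma orbL_concat (S : CMS E V K) (x : K) (l : List E) (e' : E) :
    orbL S x (l ++ [e']) = S.w e' (orbL S x l) := by
  induction l generalizing x with
  | nil => rfl
  | cons e l ih => simp only [List.cons_append, orbL, List.append_eq, ih]

lemma probL_concat (S : CMS E V K) (x : K) (l : List E) (e' : E) :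
    probL S x (l ++ [e']) = probL S x l * S.p e' (orbL S x l) := by
  induction l generalizing x with
  | nil => simp [probL, orbL]
  | cons e l ih => simp only [List.cons_append, probL, orbL, List.append_eq, ih]; ring

lemma probL_nonneg (S : CMS E V K) (x : K) (l : List E) : 0 ≤ probL S x l := by
  induction l generalizing x with
  | nil => exact zero_le_one
  | cons e l ih => exact mul_nonneg (S.p_nonneg e x) (ih _)

lemma mem_of_p_ne (S : CMS E V K) {e : E} {x : K} (h : S.p e x ≠ 0) : x ∈ S.Ks (S.i e) := by
  by_contra hx; exact h (S.p_zero e x hx)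

lemma Ks_eq (S : CMS E V K) {v v' : V} {x : K} (h : x ∈ S.Ks v) (h' : x ∈ S.Ks v') : v = v' := by
  by_contra hne
  exact absurd h' (Set.disjoint_left.mp (S.Ks_disj v v' hne) h)

lemma orbit_eq_orbL (S : CMS E V K) (e : ℤ → E) (m : ℤ) (x : K) :
    ∀ j : ℕ, S.orbit e m x j = orbL S x (List.ofFn fun i : Fin (j + 1) => e (m + (i : ℕ))) := by
  intro j
  induction j with
  | zero => simp [CMS.orbit, List.ofFn_succ, orbL]
  | succ j ih =>
    rw [List.ofFn_succ']
    simp only [List.concat_eq_append, orbL_concat, Fin.coe_castSucc, Fin.val_last]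
    rw [← ih]
    show S.w (e (m + (j:ℤ) + 1)) _ = S.w (e (m + ((j:ℕ)+1 : ℕ))) _
    congr 2
    push_cast; ring

lemma pathProb_eq_probL (S : CMS E V K) (e : ℤ → E) (m : ℤ) (x : K) :
    ∀ j : ℕ, S.pathProb e m x j = probL S x (List.ofFn fun i : Fin (j + 1) => e (m + (i : ℕ))) := by
  intro j
  induction j with
  | zero => simp [CMS.pathProb, List.ofFn_succ, probL]
  | succ j ih =>
    rw [List.ofFn_succ']
    simp only [List.concat_eq_append, probL_concat, Fin.coe_castSucc, Fin.val_last]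
    rw [← ih, ← orbit_eq_orbL]
    show _ = S.pathProb e m x j * S.p (e (m + ((j:ℕ)+1 : ℕ))) _
    rw [show (m + ((j:ℕ)+1 : ℕ) : ℤ) = m + (j:ℤ) + 1 by push_cast; ring]
    rfl

lemma keyL (S : CMS E V K) : ∀ (k : ℕ) (v : V) (x y : K), x ∈ S.Ks v → y ∈ S.Ks v →
    ∑ f : Fin k → E, probL S x (List.ofFn f) *
      dist (orbL S x (List.ofFn f)) (orbL S y (List.ofFn f)) ≤ S.a ^ k * dist x y := by
  intro k
  induction k with
  | zero =>
    intro v x y hx hy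
    simp [probL, orbL, List.ofFn_zero]
  | succ k ih =>
    intro v x y hx hy
    rw [← Equiv.sum_comp (Fin.consEquiv fun _ : Fin (k+1) => E)]
    rw [Fintype.sum_prod_type]
    have hofn : ∀ (e : E) (g : Fin k → E),
        List.ofFn ((Fin.consEquiv fun _ : Fin (k+1) => E) (e, g)) = e :: List.ofFn g := by
      intro e g
      rw [List.ofFn_succ]
      rfl
    calc ∑ e : E, ∑ g : Fin k → E,
          probL S x (List.ofFn ((Fin.consEquiv fun _ : Fin (k+1) => E) (e, g))) *
            dist (orbL S x (List.ofFn ((Fin.consEquiv fun _ : Fin (k+1) => E) (e, g))))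
                 (orbL S y (List.ofFn ((Fin.consEquiv fun _ : Fin (k+1) => E) (e, g))))
        = ∑ e : E, S.p e x * ∑ g : Fin k → E,
            probL S (S.w e x) (List.ofFn g) *
              dist (orbL S (S.w e x) (List.ofFn g)) (orbL S (S.w e y) (List.ofFn g)) := by
          refine Finset.sum_congr rfl fun e _ => ?_
          rw [Finset.mul_sum]
          refine Finset.sum_congr rfl fun g _ => ?_
          rw [hofn]
          show S.p e x * probL S (S.w e x) _ * _ = _
          ring_nf
          rfl
      _ ≤ ∑ e : E, S.p e x * (S.a ^ k * dist (S.w e x) (S.w e y)) := by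
          refine Finset.sum_le_sum fun e _ => ?_
          by_cases hpe : S.p e x = 0
          · rw [hpe]; simp
          · refine mul_le_mul_of_nonneg_left ?_ (S.p_nonneg e x)
            have hxe : x ∈ S.Ks (S.i e) := mem_of_p_ne S hpe
            have hve : v = S.i e := Ks_eq S hx hxe
            have hye : y ∈ S.Ks (S.i e) := hve ▸ hy
            exact ih (S.t e) (S.w e x) (S.w e y) (S.w_maps e hxe) (S.w_maps e hye)
      _ = S.a ^ k * ∑ e : E, S.p e x * dist (S.w e x) (S.w e y) := by
          rw [Finset.mul_sum]; refine Finset.sum_congr rfl fun e _ => ?_; ring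
      _ ≤ S.a ^ k * (S.a * dist x y) := by
          refine mul_le_mul_of_nonneg_left (S.contractive v x hx y hy)
            (pow_nonneg (le_of_lt S.ha0) k)
      _ = S.a ^ (k+1) * dist x y := by ring

noncomputable def extFn (E : Type*) [Nonempty E] (m : ℤ) (j : ℕ) (f : Fin (j + 1) → E) :
    ℤ → E := fun k =>
  if h : m ≤ k ∧ (k - m).toNat < j + 1 then f ⟨(k - m).toNat, h.2⟩ else Classical.arbitrary E

lemma extFn_apply (E : Type*) [Nonempty E] (m : ℤ) (j : ℕ) (f : Fin (j + 1) → E)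
    (i : Fin (j + 1)) : extFn E m j f (m + (i : ℕ)) = f i := by
  have h1 : m ≤ m + ((i : ℕ) : ℤ) := by omega
  have h2 : ((m + (i : ℕ) - m).toNat) < j + 1 := by have := i.isLt; omega
  rw [extFn, dif_pos ⟨h1, h2⟩]
  congr 1
  exact Fin.ext (by simp)


/-- `∫ d(Z^x_{mn}, Y^{x_1…x_N}_{mn}) dP^m_x ≤ a^{n-m+1} d(x, x_{i₀})`
for all `n ≥ m`, where `x ∈ K_{i₀}`. -/
theorem statement8 {E V K : Type*} [Fintype E] [Fintype V] [MetricSpace K] [CompleteSpace K]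
    [MeasurableSpace K] [BorelSpace K] (S : CMS E V K)
    (P : ∀ m : ℤ, K → @Measure (ℤ → E) (Am E m)) (hP : IsKernel S P)
    (xs : V → K) (hxs : ∀ v, xs v ∈ S.Ks v)
    (x : K) (i₀ : V) (hx : x ∈ S.Ks i₀) :
    ∀ m n : ℤ, m ≤ n →
      ∫⁻ σ, ENNReal.ofReal (dist (S.orbit σ m x (n - m).toNat)
          (S.orbit σ m (xs (S.i (σ m))) (n - m).toNat)) ∂(P m x) ≤
        ENNReal.ofReal (S.a ^ (n - m + 1).toNat * dist x (xs i₀)) := by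
  classical
  intro m n hmn
  haveI hEne : Nonempty E := by
    by_contra h
    haveI : IsEmpty E := not_nonempty_iff.mp h
    have h1 := S.p_sum x
    simp at h1
  set j := (n - m).toNat with hj
  have hexp : (n - m + 1).toNat = j + 1 := by omega
  rw [hexp]
  set π : (ℤ → E) → (Fin (j + 1) → E) := fun σ i => σ (m + (i : ℕ)) with hπ
  set c : (Fin (j + 1) → E) → ℝ≥0∞ := fun f =>
    ENNReal.ofReal (dist (orbL S x (List.ofFn f)) (orbL S (xs (S.i (f 0))) (List.ofFn f)))
    with hc
  have hπmeas : ∀ f : Fin (j + 1) → E, MeasurableSet[Am E m] (π ⁻¹' {f}) := by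
    intro f
    have hset : π ⁻¹' {f} = ⋂ i : Fin (j + 1), (fun σ : ℤ → E => σ (m + (i : ℕ))) ⁻¹' {f i} := by
      ext σ
      simp [hπ, funext_iff]
    rw [hset]
    refine MeasurableSet.iInter fun i => ?_
    have hle : MeasurableSpace.comap (fun σ : ℤ → E => σ (m + (i : ℕ))) ⊤ ≤ Am E m :=
      le_iSup₂ (f := fun (k : ℤ) (_ : m ≤ k) =>
        MeasurableSpace.comap (fun σ : ℤ → E => σ k) ⊤) (m + (i : ℕ)) (by omega)
    exact hle _ ⟨{f i}, trivial, rfl⟩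
  have hcylEq : ∀ f : Fin (j + 1) → E, π ⁻¹' {f} = cyl m j (extFn E m j f) := by
    intro f
    ext σ
    simp only [Set.mem_preimage, Set.mem_singleton_iff, cyl, Set.mem_setOf_eq, funext_iff, hπ]
    constructor
    · intro h k hk1 hk2
      have hlt : (k - m).toNat < j + 1 := by omega
      have h2 := h ⟨(k - m).toNat, hlt⟩
      rw [show (m + ((⟨(k - m).toNat, hlt⟩ : Fin (j + 1)) : ℕ) : ℤ) = k by simp; omega] at h2
      rw [h2, extFn, dif_pos ⟨hk1, hlt⟩]
    · intro h i
      have hk1 : m ≤ m + ((i : ℕ) : ℤ) := by omega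
      have hk2 : (m + (i : ℕ) : ℤ) ≤ m + j := by have := i.isLt; omega
      rw [h (m + (i : ℕ)) hk1 hk2, extFn_apply]
  have hmeasval : ∀ f : Fin (j + 1) → E,
      P m x (π ⁻¹' {f}) = ENNReal.ofReal (probL S x (List.ofFn f)) := by
    intro f
    rw [hcylEq f, hP.2 m x (extFn E m j f) j, pathProb_eq_probL]
    congr 2
    exact congrArg List.ofFn (funext fun i => extFn_apply E m j f i)
  have hrepr : ∀ σ : ℤ → E,
      ENNReal.ofReal (dist (S.orbit σ m x j) (S.orbit σ m (xs (S.i (σ m))) j))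
        = ∑ f : Fin (j + 1) → E, Set.indicator (π ⁻¹' {f}) (fun _ => c f) σ := by
    intro σ
    have hind : ∀ f : Fin (j + 1) → E,
        Set.indicator (π ⁻¹' {f}) (fun _ => c f) σ = if π σ = f then c f else 0 := by
      intro f
      simp [Set.indicator_apply]
    simp only [hind]
    rw [Finset.sum_ite_eq Finset.univ (π σ) c, if_pos (Finset.mem_univ _)]
    rw [orbit_eq_orbL, orbit_eq_orbL]
    have h0 : σ m = π σ 0 := by simp [hπ]
    rw [hc]
    simp only [hπ]
    norm_num
  calc ∫⁻ σ, ENNReal.ofReal (dist (S.orbit σ m x j)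
          (S.orbit σ m (xs (S.i (σ m))) j)) ∂(P m x)
      = ∫⁻ σ, ∑ f : Fin (j + 1) → E, Set.indicator (π ⁻¹' {f}) (fun _ => c f) σ ∂(P m x) :=
        lintegral_congr hrepr
    _ = ∑ f : Fin (j + 1) → E, ∫⁻ σ, Set.indicator (π ⁻¹' {f}) (fun _ => c f) σ ∂(P m x) :=
        lintegral_finset_sum _ fun f _ => Measurable.indicator measurable_const (hπmeas f)
    _ = ∑ f : Fin (j + 1) → E, c f * P m x (π ⁻¹' {f}) :=
        Finset.sum_congr rfl fun f _ => lintegral_indicator_const (hπmeas f) _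
    _ = ∑ f : Fin (j + 1) → E, ENNReal.ofReal (probL S x (List.ofFn f) *
          dist (orbL S x (List.ofFn f)) (orbL S (xs (S.i (f 0))) (List.ofFn f))) := by
        refine Finset.sum_congr rfl fun f _ => ?_
        rw [hmeasval f, hc, ← ENNReal.ofReal_mul dist_nonneg, mul_comm]
    _ = ENNReal.ofReal (∑ f : Fin (j + 1) → E, probL S x (List.ofFn f) *
          dist (orbL S x (List.ofFn f)) (orbL S (xs (S.i (f 0))) (List.ofFn f))) :=
        (ENNReal.ofReal_sum_of_nonneg fun f _ =>
          mul_nonneg (probL_nonneg S x _) dist_nonneg).symm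
    _ ≤ ENNReal.ofReal (S.a ^ (j + 1) * dist x (xs i₀)) := by
        apply ENNReal.ofReal_le_ofReal
        have hswap : ∀ f : Fin (j + 1) → E, probL S x (List.ofFn f) *
            dist (orbL S x (List.ofFn f)) (orbL S (xs (S.i (f 0))) (List.ofFn f))
            = probL S x (List.ofFn f) *
            dist (orbL S x (List.ofFn f)) (orbL S (xs i₀) (List.ofFn f)) := by
          intro f
          by_cases hp : probL S x (List.ofFn f) = 0
          · rw [hp, zero_mul, zero_mul]
          · have hpf : S.p (f 0) x ≠ 0 := by
              intro h0
              apply hp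
              rw [List.ofFn_succ]
              show S.p (f 0) x * _ = 0
              rw [h0, zero_mul]
            have hxf : x ∈ S.Ks (S.i (f 0)) := mem_of_p_ne S hpf
            rw [Ks_eq S hxf hx]
        rw [Finset.sum_congr rfl fun f _ => hswap f]
        exact keyL S (j + 1) i₀ x (xs i₀) hx (hxs i₀)
end
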